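/- Let s ∈ ℝ, 0 < p ≤ u ≤ ∞ and q ∈ (0,∞). Then the Besov–Morrey space N^s_{u,p,q}(ℝ^n) embeds continuously into the Besov-type space B^{s, 1/p − 1/u}_{p,q}(ℝ^n). -/

import Mathlib

open MeasureTheory ENNReal

noncomputable section

abbrev Euc (n : ℕ) := EuclideanSpace ℝ (Fin n)

/-- A function is radial if its value depends only on the norm. -/
def IsRadial {n : ℕ} {α : Type*} (f : Euc n → α) : Prop :=
  ∀ x y : Euc n, ‖x‖ = ‖y‖ → f x = f y

noncomputable def convFn {n : ℕ} (g f : Euc n → ℂ) (x : Euc n) : ℂ :=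
  ∫ y, g y * f (x - y)

noncomputable def dil (n : ℕ) (φ : Euc n → ℂ) (j : ℕ) : Euc n → ℂ :=
  fun x => (((2:ℝ) ^ ((j:ℝ) * n) : ℝ) : ℂ) * φ ((2:ℝ) ^ (j:ℝ) • x)

/-- The Littlewood–Paley piece `φ_j * f` (`Φ * f` if `j = 0`). -/
noncomputable def lpPiece (n : ℕ) (Φ φ f : Euc n → ℂ) (j : ℕ) : Euc n → ℂ :=
  if j = 0 then convFn Φ f else convFn (dil n φ j) f

/-- The dyadic cube `2^{-m}([0,1)^n + k)`. -/
def dyadicCube (n : ℕ) (m : ℤ) (k : Fin n → ℤ) : Set (Euc n) :=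
  {x | ∀ i, (k i : ℝ) ≤ 2 ^ (m : ℝ) * x i ∧ 2 ^ (m : ℝ) * x i < k i + 1}

/-- `ℓ^q`-quasinorm of a sequence in `[0,∞]`, `q ∈ (0,∞]`. -/
noncomputable def ellq (q : ℝ≥0∞) (a : ℕ → ℝ≥0∞) : ℝ≥0∞ :=
  if q = ∞ then ⨆ j, a j else (∑' j, a j ^ q.toReal) ^ (1 / q.toReal)

/-- The Besov-type norm `‖f‖_{B^{s,τ}_{p,q}}` w.r.t. the dyadic resolution `(Φ, φ)`:
`sup_P |P|^{-τ} ( ∑_{j ≥ max(j_P,0)} 2^{jsq} (∫_P |φ_j * f|^p)^{q/p} )^{1/q}`. -/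
noncomputable def besovTypeNorm (n : ℕ) (s τ p : ℝ) (q : ℝ≥0∞)
    (Φ φ f : Euc n → ℂ) : ℝ≥0∞ :=
  ⨆ (m : ℤ) (k : Fin n → ℤ),
    ENNReal.ofReal ((2:ℝ) ^ ((m:ℝ) * n * τ)) *
      ellq q (fun j => if m ≤ (j : ℤ) then
        ENNReal.ofReal ((2:ℝ) ^ ((j:ℝ) * s)) *
          (∫⁻ x in dyadicCube n m k, ENNReal.ofReal (‖lpPiece n Φ φ f j x‖ ^ p)) ^ (1/p)
        else 0)

/-- Admissible pair of generators for the dyadic resolution of unity. -/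
structure AdmissiblePair (n : ℕ) (Φ φ : Euc n → ℂ) : Prop where
  schwartzPhi : ∃ F : SchwartzMap (Euc n) ℂ, ⇑F = Φ
  schwartzphi : ∃ F : SchwartzMap (Euc n) ℂ, ⇑F = φ
  suppPhi : ∀ ξ : Euc n, 2 < ‖ξ‖ → FourierTransform.fourier Φ ξ = 0
  lowerPhi : ∃ c : ℝ, 0 < c ∧ ∀ ξ : Euc n, ‖ξ‖ ≤ 5/3 → c ≤ ‖FourierTransform.fourier Φ ξ‖
  suppphi : ∀ ξ : Euc n, ‖ξ‖ < 1/2 ∨ 2 < ‖ξ‖ → FourierTransform.fourier φ ξ = 0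
  lowerphi : ∃ c : ℝ, 0 < c ∧ ∀ ξ : Euc n, 3/5 ≤ ‖ξ‖ → ‖ξ‖ ≤ 5/3 →
    c ≤ ‖FourierTransform.fourier φ ξ‖

/-- Morrey norm `‖f‖_{M^u_p}` (with `p, u ∈ (0,∞]`, convention `1/∞ = 0`). -/
noncomputable def morreyNorm (n : ℕ) (p u : ℝ≥0∞) (f : Euc n → ℂ) : ℝ≥0∞ :=
  ⨆ (c : Euc n) (r : ℝ) (_ : 0 < r),
    volume (Metric.ball c r) ^ (1 / u.toReal - 1 / p.toReal) *
      (∫⁻ y in Metric.ball c r, ENNReal.ofReal (‖f y‖ ^ p.toReal)) ^ (1 / p.toReal)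

/-- The Besov–Morrey norm `‖f‖_{N^s_{u,p,q}}` w.r.t. `(Φ, φ)`. -/
noncomputable def besovMorreyNorm (n : ℕ) (s : ℝ) (p u q : ℝ≥0∞)
    (Φ φ f : Euc n → ℂ) : ℝ≥0∞ :=
  ellq q (fun j =>
    ENNReal.ofReal ((2:ℝ) ^ ((j:ℝ) * s)) * morreyNorm n p u (lpPiece n Φ φ f j))

/-! A dyadic cube `P` of side `2^{-m}` lies in a ball `B` of radius `(n+1) 2^{-m}`, so the
`L^p(P)` piece of each Littlewood–Paley block is at most `|B|^{1/p-1/u}` times its Morrey norm.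
Since `|B| = 2^{-mn} |B(0, n+1)|`, multiplying by `|P|^{-(1/p-1/u)} = 2^{mn(1/p-1/u)}` leaves a
constant independent of `P`, and the `ℓ^q` sums compare termwise. -/

open Metric

theorem ellq_mono {q : ℝ≥0∞} {a b : ℕ → ℝ≥0∞} (h : ∀ j, a j ≤ b j) :
    ellq q a ≤ ellq q b := by
  unfold ellq
  split
  · exact iSup_mono h
  · gcongr with j
    exact h j

theorem ellq_const_mul {q : ℝ≥0∞} (hq : q ≠ 0) (c : ℝ≥0∞) (a : ℕ → ℝ≥0∞) :
    ellq q (fun j => c * a j) = c * ellq q a := by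
  unfold ellq
  split_ifs with htop
  · exact (ENNReal.mul_iSup c a).symm
  · have ht : q.toReal ≠ 0 := ENNReal.toReal_ne_zero.mpr ⟨hq, htop⟩
    simp_rw [ENNReal.mul_rpow_of_nonneg _ _ ENNReal.toReal_nonneg, ENNReal.tsum_mul_left,
      ENNReal.mul_rpow_of_nonneg _ _ (by positivity : (0:ℝ) ≤ 1 / q.toReal),
      ← ENNReal.rpow_mul, mul_one_div_cancel ht, ENNReal.rpow_one]

theorem EuclideanSpace.dist_le_sqrt_card_mul {ι : Type*} [Fintype ι]
    {x y : EuclideanSpace ℝ ι} {δ : ℝ} (hδ : 0 ≤ δ) (h : ∀ i, dist (x i) (y i) ≤ δ) :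
    dist x y ≤ √(Fintype.card ι) * δ := by
  rw [EuclideanSpace.dist_eq, ← Real.sqrt_sq hδ, ← Real.sqrt_mul (Nat.cast_nonneg _)]
  gcongr
  calc ∑ i, dist (x i) (y i) ^ 2 ≤ ∑ _i : ι, δ ^ 2 := by gcongr with i; exact h i
    _ = Fintype.card ι * δ ^ 2 := by simp

theorem dyadicCube_subset_ball (n : ℕ) (m : ℤ) (k : Fin n → ℤ) :
    dyadicCube n m k ⊆
      ball (WithLp.toLp 2 fun i => (k i : ℝ) * 2 ^ (-(m : ℝ))) (2 ^ (-(m : ℝ)) * (n + 1)) := by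
  intro x hx
  have hside : (0 : ℝ) < 2 ^ (-(m : ℝ)) := by positivity
  have hcoord : ∀ i, dist (x i) ((k i : ℝ) * 2 ^ (-(m : ℝ))) ≤ 2 ^ (-(m : ℝ)) := by
    intro i
    obtain ⟨hlo, hhi⟩ := hx i
    have hscale : (0 : ℝ) < 2 ^ (m : ℝ) := by positivity
    have hshift : x i - k i * 2 ^ (-(m : ℝ)) = (2 ^ (m : ℝ) * x i - k i) * 2 ^ (-(m : ℝ)) := by
      rw [Real.rpow_neg zero_le_two]
      field_simp
    rw [Real.dist_eq, hshift, abs_of_nonneg (mul_nonneg (by linarith) hside.le)]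
    exact mul_le_of_le_one_left hside.le (by linarith)
  have hsqrt : √(n : ℝ) < n + 1 := by
    rw [Real.sqrt_lt' (by positivity)]
    nlinarith
  calc dist x _ ≤ √(Fintype.card (Fin n)) * 2 ^ (-(m : ℝ)) :=
        EuclideanSpace.dist_le_sqrt_card_mul hside.le hcoord
    _ < 2 ^ (-(m : ℝ)) * (n + 1) := by
        rw [Fintype.card_fin, mul_comm]
        gcongr

theorem setLIntegral_rpow_le_volume_ball_mul_morreyNorm {n : ℕ} (p u : ℝ≥0∞) (g : Euc n → ℂ)
    {S : Set (Euc n)} {c : Euc n} {r : ℝ} (hr : 0 < r) (hS : S ⊆ ball c r) :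
    (∫⁻ x in S, ENNReal.ofReal (‖g x‖ ^ p.toReal)) ^ (1 / p.toReal)
      ≤ volume (ball c r) ^ (1 / p.toReal - 1 / u.toReal) * morreyNorm n p u g := by
  have hpos : volume (ball c r) ≠ 0 := (measure_ball_pos volume c hr).ne'
  have hfin : volume (ball c r) ≠ ∞ := measure_ball_lt_top.ne
  calc (∫⁻ x in S, ENNReal.ofReal (‖g x‖ ^ p.toReal)) ^ (1 / p.toReal)
      ≤ (∫⁻ x in ball c r, ENNReal.ofReal (‖g x‖ ^ p.toReal)) ^ (1 / p.toReal) := by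
        gcongr
    _ = volume (ball c r) ^ (1 / p.toReal - 1 / u.toReal) *
          (volume (ball c r) ^ (1 / u.toReal - 1 / p.toReal) *
            (∫⁻ x in ball c r, ENNReal.ofReal (‖g x‖ ^ p.toReal)) ^ (1 / p.toReal)) := by
        rw [← mul_assoc, ← ENNReal.rpow_add _ _ hpos hfin, sub_add_sub_cancel', sub_self,
          ENNReal.rpow_zero, one_mul]
    _ ≤ volume (ball c r) ^ (1 / p.toReal - 1 / u.toReal) * morreyNorm n p u g := by
        gcongr
        exact le_iSup₂_of_le c r (le_iSup_of_le hr le_rfl)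

theorem ofReal_two_rpow_mul_volume_ball_rpow (n : ℕ) (m : ℤ) (c : Euc n) (τ : ℝ) :
    ENNReal.ofReal (2 ^ ((m : ℝ) * n * τ)) * volume (ball c (2 ^ (-(m : ℝ)) * (n + 1))) ^ τ
      = volume (ball (0 : Euc n) (n + 1)) ^ τ := by
  have hscale : (2 : ℝ) ^ ((m : ℝ) * n * τ) * ((2 ^ (-(m : ℝ))) ^ n) ^ τ = 1 := by
    rw [← Real.rpow_natCast, ← Real.rpow_mul zero_le_two, ← Real.rpow_mul zero_le_two,
      ← Real.rpow_add two_pos]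
    convert Real.rpow_zero (2 : ℝ) using 2
    ring
  rw [Measure.addHaar_ball_mul_of_pos volume c (by positivity),
    finrank_euclideanSpace_fin, ENNReal.mul_rpow_of_ne_top ofReal_ne_top measure_ball_lt_top.ne,
    ← mul_assoc, ENNReal.ofReal_rpow_of_pos (by positivity), ← ENNReal.ofReal_mul (by positivity),
    hscale, ENNReal.ofReal_one, one_mul]

theorem setLIntegral_dyadicCube_le_morreyNorm (n : ℕ) (m : ℤ) (k : Fin n → ℤ) (p u : ℝ≥0∞)
    (g : Euc n → ℂ) :
    ENNReal.ofReal (2 ^ ((m : ℝ) * n * (1 / p.toReal - 1 / u.toReal))) *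
        (∫⁻ x in dyadicCube n m k, ENNReal.ofReal (‖g x‖ ^ p.toReal)) ^ (1 / p.toReal)
      ≤ volume (ball (0 : Euc n) (n + 1)) ^ (1 / p.toReal - 1 / u.toReal) *
          morreyNorm n p u g := by
  grw [setLIntegral_rpow_le_volume_ball_mul_morreyNorm p u g (by positivity)
    (dyadicCube_subset_ball n m k), ← mul_assoc, ofReal_two_rpow_mul_volume_ball_rpow]

theorem besovMorrey_embeds_besovType_general (n : ℕ) (s : ℝ) (p u q : ℝ≥0∞)
    (hq : 0 < q) (Φ φ : Euc n → ℂ) :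
    ∃ C : ℝ≥0∞, C ≠ ∞ ∧
      ∀ f : Euc n → ℂ, LocallyIntegrable f volume →
        besovTypeNorm n s (1/p.toReal - 1/u.toReal) p.toReal q Φ φ f
          ≤ C * besovMorreyNorm n s p u q Φ φ f := by
  refine ⟨volume (ball (0 : Euc n) (n + 1)) ^ (1 / p.toReal - 1 / u.toReal),
    ENNReal.rpow_ne_top_of_ne_zero (measure_ball_pos volume _ (by positivity)).ne'
      measure_ball_lt_top.ne, fun f _ => iSup₂_le fun m k => ?_⟩
  rw [← ellq_const_mul hq.ne', besovMorreyNorm, ← ellq_const_mul hq.ne']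
  refine ellq_mono fun j => ?_
  split_ifs
  · rw [mul_left_comm, mul_left_comm (volume _ ^ _)]
    gcongr _ * ?_
    exact setLIntegral_dyadicCube_le_morreyNorm n m k p u _
  · simp

/-- For `q ∈ (0,∞)`, `N^s_{u,p,q}(ℝ^n)` embeds continuously into
`B^{s, 1/p - 1/u}_{p,q}(ℝ^n)`. -/
theorem besovMorrey_embeds_besovType (n : ℕ) (s : ℝ) (p u q : ℝ≥0∞)
    (hp : 0 < p) (hpu : p ≤ u) (hu : u ≤ ∞) (hq : 0 < q) (hq' : q ≠ ∞)
    (Φ φ : Euc n → ℂ) (hpair : AdmissiblePair n Φ φ) :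
    ∃ C : ℝ≥0∞, C ≠ ∞ ∧
      ∀ f : Euc n → ℂ, LocallyIntegrable f volume →
        besovTypeNorm n s (1/p.toReal - 1/u.toReal) p.toReal q Φ φ f
          ≤ C * besovMorreyNorm n s p u q Φ φ f :=
  besovMorrey_embeds_besovType_general n s p u q hq Φ φ

end
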